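/- Let τ ∈ ℂ with Im(τ) > 0 and let z ∈ S(τ) (note that S(τ) = −S(τ), so −z ∈ S(τ) as well). Then F(z;τ) = F(−z;τ) − iz/τ. -/

import Mathlib

open MeasureTheory

noncomputable section

/-- The strip `S(τ) = {z : |Re(z ⋅ conj τ)| < π Im τ}`. -/
def stripS (τ : ℂ) : Set ℂ := {z : ℂ | |(z * (starRingEnd ℂ) τ).re| < Real.pi * τ.im}

/-- The parallelogram `P(τ) = S(τ) ∩ {z : |Im z| < π Im τ}`. -/
def parP (τ : ℂ) : Set ℂ := stripS τ ∩ {z : ℂ | |z.im| < Real.pi * τ.im}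

/-- The function `F(z;τ) = ∫_ℝ dx / ((1 + e^{z + iτx})(1 + e^x))`. -/
def Fk (z τ : ℂ) : ℂ :=
  ∫ x : ℝ, 1 / ((1 + Complex.exp (z + Complex.I * τ * x)) * (1 + Complex.exp (x : ℂ)))

/-!
Write `σ(w) = 1 / (1 + e^w)`, so that `σ(-w) = 1 - σ(w)` and `σ' = -σ(w) σ(-w)`. The integrand of
`F(z;τ)` is `σ(z + iτx) σ(x)`; substituting `x ↦ -x` in `F(-z;τ)` turns the difference
`F(z;τ) - F(-z;τ)` into the regularized integral `Φ(z) = ∫ (σ(z + iτx) - σ(-x)) dx`.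
Differentiating under the integral sign, `Φ'(z) = ∫ σ'(z + iτx) dx = (iτ)⁻¹ [σ(z + iτx)]_{x=-∞}^{∞}
= (iτ)⁻¹`, since `Re(z + iτx) → ∓∞` as `x → ±∞`. As `Φ(0) = 0` and `S(τ)` is convex,
`Φ(z) = -iz/τ`.

The zeros `(2n+1)πi` of `1 + e^w` lie outside the strip `S(τ)`, which is invariant under
`w ↦ w + iτx`; hence `1 + e^{z + iτx}` is bounded away from `0` uniformly for `z` in a compact
subset of `S(τ)`, and `σ(w) σ(-w) = O(e^{-|Re w|})` gives the exponential domination needed.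
-/

open Complex Filter Set Topology

def fermi (w : ℂ) : ℂ := (1 + exp w)⁻¹

lemma fermi_neg (w : ℂ) : fermi (-w) = exp w * fermi w := by
  have hw := exp_ne_zero w
  rw [fermi, fermi, exp_neg, show 1 + (exp w)⁻¹ = (1 + exp w) * (exp w)⁻¹ by field_simp; ring,
    mul_inv, inv_inv, mul_comm]

lemma fermi_neg_eq_one_sub {w : ℂ} (h : 1 + exp w ≠ 0) : fermi (-w) = 1 - fermi w := by
  rw [fermi_neg, fermi]
  field_simp
  ring

lemma fermi_mul_fermi_sub_fermi_neg_mul_fermi_neg {a b : ℂ} (ha : 1 + exp a ≠ 0)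
    (hb : 1 + exp b ≠ 0) :
    fermi a * fermi b - fermi (-a) * fermi (-b) = fermi a - fermi (-b) := by
  rw [fermi_neg_eq_one_sub ha, fermi_neg_eq_one_sub hb]
  ring

lemma hasDerivAt_fermi {w : ℂ} (h : 1 + exp w ≠ 0) :
    HasDerivAt fermi (-(fermi w * fermi (-w))) w := by
  refine (((hasDerivAt_exp w).const_add 1).inv h).congr_deriv ?_
  rw [fermi_neg, fermi]
  field_simp

lemma Continuous.fermi {α : Type*} [TopologicalSpace α] {f : α → ℂ} (hf : Continuous f)
    (h : ∀ a, 1 + exp (f a) ≠ 0) : Continuous fun a => _root_.fermi (f a) :=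
  (continuous_const.add hf.cexp).inv₀ h

lemma one_le_norm_one_add_exp_ofReal (x : ℝ) : 1 ≤ ‖1 + exp (x : ℂ)‖ := by
  rw [← ofReal_exp, ← ofReal_one, ← ofReal_add, norm_real, Real.norm_of_nonneg (by positivity)]
  linarith [Real.exp_pos x]

lemma one_add_exp_ofReal_ne_zero (x : ℝ) : 1 + exp (x : ℂ) ≠ 0 :=
  norm_pos_iff.1 (one_pos.trans_le (one_le_norm_one_add_exp_ofReal x))

lemma tendsto_fermi_comap_re_atBot : Tendsto fermi (comap re atBot) (𝓝 1) := by
  have := (tendsto_exp_comap_re_atBot.const_add 1).inv₀ (by norm_num : (1 : ℂ) + 0 ≠ 0)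
  rwa [add_zero, inv_one] at this

lemma tendsto_fermi_comap_re_atTop : Tendsto fermi (comap re atTop) (𝓝 0) :=
  tendsto_inv₀_cobounded.comp ((tendsto_const_add_cobounded 1).comp tendsto_exp_comap_re_atTop)

section Bounds

variable {w : ℂ} {c : ℝ}

lemma half_le_norm_one_add_exp (h : Real.log 2 ≤ |w.re|) : 1 / 2 ≤ ‖1 + exp w‖ := by
  have key : |Real.exp w.re - 1| ≤ ‖1 + exp w‖ := by
    simpa [norm_exp, add_comm] using abs_norm_sub_norm_le (exp w) (-1)
  rcases le_abs'.1 h with hw | hw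
  · have : Real.exp w.re ≤ 1 / 2 := by
      rw [← Real.exp_log (by norm_num : (0:ℝ) < 1 / 2), one_div, Real.log_inv]
      exact Real.exp_le_exp.2 (by linarith)
    rw [abs_of_neg (by linarith)] at key
    linarith
  · have : 2 ≤ Real.exp w.re := by
      rw [← Real.exp_log (by norm_num : (0:ℝ) < 2)]
      exact Real.exp_le_exp.2 hw
    rw [abs_of_pos (by linarith)] at key
    linarith

lemma norm_fermi_le (hc : 0 < c) (h : c ≤ ‖1 + exp w‖) : ‖fermi w‖ ≤ c⁻¹ := by
  rw [fermi, norm_inv]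
  exact inv_anti₀ hc h

lemma norm_fermi_neg_le (hc : 0 < c) (h : c ≤ ‖1 + exp w‖) : ‖fermi (-w)‖ ≤ 1 + c⁻¹ := by
  rw [fermi_neg_eq_one_sub (norm_pos_iff.1 (hc.trans_le h))]
  exact (norm_sub_le _ _).trans (by rw [norm_one]; gcongr; exact norm_fermi_le hc h)

lemma norm_fermi_le_exp (hc : 0 < c) (h : c ≤ ‖1 + exp w‖) :
    ‖fermi w‖ ≤ (1 + c⁻¹) * Real.exp (-w.re) := by
  rw [← neg_neg w, fermi_neg, norm_mul, norm_exp, neg_re, neg_neg, mul_comm]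
  gcongr
  exact norm_fermi_neg_le hc h

lemma norm_fermi_mul_fermi_neg_le (hc : 0 < c) (h : c ≤ ‖1 + exp w‖) :
    ‖fermi w * fermi (-w)‖ ≤ (1 + c⁻¹) ^ 2 * Real.exp (-|w.re|) := by
  have hc' : c⁻¹ ≤ 1 + c⁻¹ := by linarith
  rw [norm_mul]
  rcases le_total 0 w.re with hw | hw
  · rw [abs_of_nonneg hw]
    calc ‖fermi w‖ * ‖fermi (-w)‖ ≤ (1 + c⁻¹) * Real.exp (-w.re) * (1 + c⁻¹) := by
          gcongr
          exacts [norm_fermi_le_exp hc h, norm_fermi_neg_le hc h]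
      _ = _ := by ring
  · rw [abs_of_nonpos hw, neg_neg, fermi_neg, norm_mul, norm_exp]
    calc ‖fermi w‖ * (Real.exp w.re * ‖fermi w‖) ≤ (1 + c⁻¹) * (Real.exp w.re * (1 + c⁻¹)) := by
          have := (norm_fermi_le hc h).trans hc'
          gcongr
      _ = _ := by ring

end Bounds

section Strip

variable {τ z w : ℂ}

lemma re_add_I_mul_mul_conj (z τ : ℂ) (x : ℝ) :
    ((z + I * τ * x) * (starRingEnd ℂ) τ).re = (z * (starRingEnd ℂ) τ).re := by
  simp only [add_mul, add_re, mul_re, mul_im, I_re, I_im, ofReal_re, ofReal_im, conj_re, conj_im]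
  ring

lemma re_add_I_mul (z τ : ℂ) (x : ℝ) : (z + I * τ * x).re = z.re - τ.im * x := by
  simp only [add_re, mul_re, I_re, I_im, ofReal_re, ofReal_im]
  ring

lemma add_I_mul_mem_stripS (hz : z ∈ stripS τ) (x : ℝ) : z + I * τ * x ∈ stripS τ := by
  rwa [stripS, mem_ofPred_eq, re_add_I_mul_mul_conj]

lemma neg_mem_stripS (hz : z ∈ stripS τ) : -z ∈ stripS τ := by
  rwa [stripS, mem_ofPred_eq, neg_mul, neg_re, abs_neg]

lemma zero_mem_stripS (hτ : 0 < τ.im) : 0 ∈ stripS τ := by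
  simp only [stripS, mem_ofPred_eq, zero_mul, zero_re, abs_zero]
  positivity

lemma isOpen_stripS : IsOpen (stripS τ) :=
  isOpen_lt (by fun_prop) continuous_const

lemma convex_stripS : Convex ℝ (stripS τ) := by
  have : stripS τ = (reLm.comp (LinearMap.mulRight ℝ ((starRingEnd ℂ) τ))) ⁻¹'
      Metric.ball 0 (Real.pi * τ.im) := by
    ext z
    simp [stripS]
  rw [this]
  exact (convex_ball _ _).linear_preimage _

lemma one_add_exp_ne_zero_of_mem_stripS (hw : w ∈ stripS τ) : 1 + exp w ≠ 0 := by
  intro h0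
  have h1 : exp (w - Real.pi * I) = 1 := by
    rw [exp_sub, exp_pi_mul_I, show exp w = -1 by linear_combination h0]
    norm_num
  obtain ⟨n, hn⟩ := exp_eq_one_iff.1 h1
  have hre : (w * (starRingEnd ℂ) τ).re = (2 * n + 1) * (Real.pi * τ.im) := by
    rw [show w = (2 * n + 1) * Real.pi * I by linear_combination hn]
    simp
    ring
  have hn1 : (1 : ℝ) ≤ |2 * (n : ℝ) + 1| := by
    have : (2 * n + 1 : ℤ) ≠ 0 := by omega
    exact_mod_cast Int.one_le_abs this
  rw [stripS, mem_ofPred_eq, hre, abs_mul] at hw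
  have : 1 * |Real.pi * τ.im| ≤ |2 * (n : ℝ) + 1| * |Real.pi * τ.im| := by gcongr
  linarith [le_abs_self (Real.pi * τ.im)]

lemma one_add_exp_line_ne_zero (hz : z ∈ stripS τ) (x : ℝ) : 1 + exp (z + I * τ * x) ≠ 0 :=
  one_add_exp_ne_zero_of_mem_stripS (add_I_mul_mem_stripS hz x)

end Strip

lemma integrable_exp_neg_mul_abs {a : ℝ} (ha : 0 < a) :
    Integrable fun x : ℝ => Real.exp (-a * |x|) := by
  rw [← integrableOn_univ, ← Iic_union_Ioi (a := 0), integrableOn_union]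
  refine ⟨(integrableOn_exp_mul_Iic ha 0).congr_fun (fun x hx => ?_) measurableSet_Iic,
    (exp_neg_integrableOn_Ioi 0 ha).congr_fun (fun x hx => ?_) measurableSet_Ioi⟩
  · rw [abs_of_nonpos hx, mul_neg, neg_mul, neg_neg]
  · rw [abs_of_pos hx]

section Line

variable {τ z : ℂ} {K : Set ℂ}

lemma continuous_line (z τ : ℂ) : Continuous fun x : ℝ => z + I * τ * x := by fun_prop

/-- Where `|Re w| ≥ log 2` along the lines, `‖1 + exp w‖ ≥ 1 / 2`; the rest of `K × ℝ` is
compact, and there `1 + exp w` does not vanish. -/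
lemma exists_pos_le_norm_one_add_exp_line (hτ : 0 < τ.im) (hK : IsCompact K)
    (hKS : K ⊆ stripS τ) : ∃ c > 0, ∀ z ∈ K, ∀ x : ℝ, c ≤ ‖1 + exp (z + I * τ * x)‖ := by
  obtain ⟨M, hM⟩ := hK.exists_bound_of_continuousOn continuous_re.continuousOn
  set L := (M + Real.log 2) / τ.im
  obtain ⟨m, hm, hmK⟩ := (hK.prod (isCompact_Icc (a := -L) (b := L))).exists_forall_le'
    (f := fun p : ℂ × ℝ => ‖1 + exp (p.1 + I * τ * p.2)‖) (by fun_prop)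
    (fun p hp => norm_pos_iff.2 (one_add_exp_line_ne_zero (hKS hp.1) p.2))
  refine ⟨min m (1 / 2), by positivity, fun z hz x => ?_⟩
  by_cases hx : |x| ≤ L
  · exact (min_le_left _ _).trans (hmK (z, x) ⟨hz, abs_le.1 hx⟩)
  refine (min_le_right _ _).trans (half_le_norm_one_add_exp ?_)
  have hL : M + Real.log 2 < τ.im * |x| := by
    rwa [not_le, div_lt_iff₀' hτ] at hx
  have hzM : |z.re| ≤ M := by simpa using hM z hz
  rw [re_add_I_mul]
  calc Real.log 2 ≤ |τ.im * x| - |z.re| := by rw [abs_mul, abs_of_pos hτ]; linarith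
    _ ≤ |z.re - τ.im * x| := by rw [abs_sub_comm]; exact abs_sub_abs_le_abs_sub _ _

lemma exists_fermi_mul_fermi_neg_line_le (hτ : 0 < τ.im) (hK : IsCompact K)
    (hKS : K ⊆ stripS τ) : ∃ A, ∀ z ∈ K, ∀ x : ℝ,
      ‖fermi (z + I * τ * x) * fermi (-(z + I * τ * x))‖ ≤ A * Real.exp (-τ.im * |x|) := by
  obtain ⟨c, hc, hcK⟩ := exists_pos_le_norm_one_add_exp_line hτ hK hKS
  obtain ⟨M, hM⟩ := hK.exists_bound_of_continuousOn continuous_re.continuousOn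
  refine ⟨(1 + c⁻¹) ^ 2 * Real.exp M, fun z hz x => ?_⟩
  have hzM : |z.re| ≤ M := by simpa using hM z hz
  refine (norm_fermi_mul_fermi_neg_le hc (hcK z hz x)).trans ?_
  rw [mul_assoc ((1 + c⁻¹) ^ 2), ← Real.exp_add, re_add_I_mul]
  gcongr
  have : |τ.im * x| ≤ |z.re - τ.im * x| + |z.re| := by
    simpa [abs_sub_comm] using abs_sub_le (τ.im * x) z.re 0
  rw [abs_mul, abs_of_pos hτ] at this
  linarith

lemma integrable_fermi_line_mul_fermi (hτ : 0 < τ.im) (hz : z ∈ stripS τ) :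
    Integrable fun x : ℝ => fermi (z + I * τ * x) * fermi x := by
  obtain ⟨c, hc, hcz⟩ := exists_pos_le_norm_one_add_exp_line hτ isCompact_singleton
    (singleton_subset_iff.2 hz)
  have hbound : ∀ x : ℝ, ‖fermi (z + I * τ * x) * fermi x‖ ≤
      2 * c⁻¹ * Real.exp (-1 * |x|) + (1 + c⁻¹) * Real.exp (-z.re) * Real.exp (-τ.im * |x|) := by
    intro x
    have hw := hcz z rfl x
    have hx := one_le_norm_one_add_exp_ofReal x
    rw [norm_mul]
    rcases le_total 0 x with hx0 | hx0
    · have h1 := norm_fermi_le_exp one_pos hx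
      rw [ofReal_re, inv_one, one_add_one_eq_two] at h1
      rw [abs_of_nonneg hx0, neg_one_mul]
      calc ‖fermi (z + I * τ * x)‖ * ‖fermi x‖ ≤ c⁻¹ * (2 * Real.exp (-x)) := by
            gcongr
            exact norm_fermi_le hc hw
        _ ≤ _ := le_add_of_le_of_nonneg (le_of_eq (by ring)) (by positivity)
    · have h1 := norm_fermi_le_exp hc hw
      have h2 := norm_fermi_le one_pos hx
      rw [re_add_I_mul] at h1
      rw [inv_one] at h2
      calc ‖fermi (z + I * τ * x)‖ * ‖fermi x‖
          ≤ (1 + c⁻¹) * Real.exp (-(z.re - τ.im * x)) * 1 := by gcongr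
        _ = (1 + c⁻¹) * Real.exp (-z.re) * Real.exp (-τ.im * |x|) := by
            rw [abs_of_nonpos hx0, mul_one, mul_assoc, ← Real.exp_add]
            ring_nf
        _ ≤ _ := le_add_of_nonneg_left (by positivity)
  refine Integrable.mono' (((integrable_exp_neg_mul_abs one_pos).const_mul _).add
    ((integrable_exp_neg_mul_abs hτ).const_mul _)) ?_ (ae_of_all _ hbound)
  exact ((continuous_line z τ).fermi (one_add_exp_line_ne_zero hz)).mul
    (continuous_ofReal.fermi one_add_exp_ofReal_ne_zero) |>.aestronglyMeasurable

end Line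

section Integrals

variable {τ z : ℂ}

lemma continuous_fermi_mul_fermi_neg_line (hz : z ∈ stripS τ) :
    Continuous fun x : ℝ => fermi (z + I * τ * x) * fermi (-(z + I * τ * x)) :=
  ((continuous_line z τ).fermi (one_add_exp_line_ne_zero hz)).mul
    ((continuous_line z τ).neg.fermi fun x =>
      one_add_exp_ne_zero_of_mem_stripS (neg_mem_stripS (add_I_mul_mem_stripS hz x)))

lemma tendsto_line_atTop (hτ : 0 < τ.im) :
    Tendsto (fun x : ℝ => z + I * τ * x) atTop (comap re atBot) := by
  simp only [tendsto_comap_iff, Function.comp_def, re_add_I_mul, sub_eq_add_neg, ← neg_mul]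
  exact tendsto_atBot_add_const_left _ _ (tendsto_id.const_mul_atTop_of_neg (by linarith))

lemma tendsto_line_atBot (hτ : 0 < τ.im) :
    Tendsto (fun x : ℝ => z + I * τ * x) atBot (comap re atTop) := by
  simp only [tendsto_comap_iff, Function.comp_def, re_add_I_mul, sub_eq_add_neg, ← neg_mul]
  exact tendsto_atTop_add_const_left _ _ (tendsto_id.const_mul_atBot_of_neg (by linarith))

lemma integral_fermi_mul_fermi_neg_line (hτ : 0 < τ.im) (hz : z ∈ stripS τ) :
    ∫ x : ℝ, fermi (z + I * τ * x) * fermi (-(z + I * τ * x)) = I / τ := by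
  have hderiv (x : ℝ) : HasDerivAt (fun x : ℝ => fermi (z + I * τ * x))
      (-(fermi (z + I * τ * x) * fermi (-(z + I * τ * x))) * (I * τ)) x := by
    have hline : HasDerivAt (fun u : ℂ => z + I * τ * u) (I * τ) x := by
      simpa using ((hasDerivAt_id (x : ℂ)).const_mul (I * τ)).const_add z
    exact ((hasDerivAt_fermi (one_add_exp_line_ne_zero hz x)).comp
      (h := fun u : ℂ => z + I * τ * u) _ hline).comp_ofReal
  obtain ⟨A, hA⟩ := exists_fermi_mul_fermi_neg_line_le hτ isCompact_singleton
    (singleton_subset_iff.2 hz)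
  have hint : Integrable fun x : ℝ => fermi (z + I * τ * x) * fermi (-(z + I * τ * x)) :=
    ((integrable_exp_neg_mul_abs hτ).const_mul A).mono'
      (continuous_fermi_mul_fermi_neg_line hz).aestronglyMeasurable
      (ae_of_all _ (hA z rfl))
  have hftc := integral_of_hasDerivAt_of_tendsto hderiv (hint.neg.mul_const _)
    (tendsto_fermi_comap_re_atTop.comp (tendsto_line_atBot hτ))
    (tendsto_fermi_comap_re_atBot.comp (tendsto_line_atTop hτ))
  set J := ∫ x : ℝ, fermi (z + I * τ * x) * fermi (-(z + I * τ * x))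
  rw [integral_mul_const, integral_neg, sub_zero] at hftc
  have hτ0 : τ ≠ 0 := fun h => by simp [h] at hτ
  rw [eq_div_iff hτ0]
  linear_combination I * hftc + J * τ * I_sq

end Integrals

/-- `fermi (z + I * τ * x) → 1` as `x → ∞`; subtracting `fermi (-x)` makes the integrand
integrable. -/
def regFermiIntegral (τ z : ℂ) : ℂ := ∫ x : ℝ, (fermi (z + I * τ * x) - fermi (-x))

section Regularized

variable {τ z : ℂ}

lemma Fk_eq_integral_fermi (z τ : ℂ) : Fk z τ = ∫ x : ℝ, fermi (z + I * τ * x) * fermi x := by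
  simp only [Fk, fermi, one_div, mul_inv]

lemma fermi_line_sub_fermi_neg (hz : z ∈ stripS τ) (x : ℝ) :
    fermi (z + I * τ * x) - fermi (-x) =
      fermi (z + I * τ * x) * fermi x - fermi (-z + I * τ * ↑(-x)) * fermi ↑(-x) := by
  rw [show -z + I * τ * ↑(-x) = -(z + I * τ * x) by push_cast; ring, ofReal_neg,
    fermi_mul_fermi_sub_fermi_neg_mul_fermi_neg (one_add_exp_line_ne_zero hz x)
      (one_add_exp_ofReal_ne_zero x)]

lemma Fk_sub_Fk_neg (hτ : 0 < τ.im) (hz : z ∈ stripS τ) :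
    Fk z τ - Fk (-z) τ = regFermiIntegral τ z := by
  rw [Fk_eq_integral_fermi, Fk_eq_integral_fermi,
    ← integral_neg_eq_self (fun x : ℝ => fermi (-z + I * τ * x) * fermi x),
    ← integral_sub (integrable_fermi_line_mul_fermi hτ hz)
      (integrable_fermi_line_mul_fermi hτ (neg_mem_stripS hz)).comp_neg]
  simp only [regFermiIntegral, fermi_line_sub_fermi_neg hz]

lemma integrable_fermi_line_sub_fermi_neg (hτ : 0 < τ.im) (hz : z ∈ stripS τ) :
    Integrable fun x : ℝ => fermi (z + I * τ * x) - fermi (-x) := by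
  simp only [fermi_line_sub_fermi_neg hz]
  exact (integrable_fermi_line_mul_fermi hτ hz).sub
    (integrable_fermi_line_mul_fermi hτ (neg_mem_stripS hz)).comp_neg

lemma hasDerivAt_regFermiIntegral (hτ : 0 < τ.im) (hz : z ∈ stripS τ) :
    HasDerivAt (regFermiIntegral τ) (-(I / τ)) z := by
  obtain ⟨ε, hε, hεS⟩ := Metric.nhds_basis_closedBall.mem_iff.1 (isOpen_stripS.mem_nhds hz)
  obtain ⟨A, hA⟩ := exists_fermi_mul_fermi_neg_line_le hτ (isCompact_closedBall z ε) hεS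
  have hmeas (z' : ℂ) (hz' : z' ∈ stripS τ) :
      AEStronglyMeasurable (fun x : ℝ => fermi (z' + I * τ * x) - fermi (-x)) :=
    (((continuous_line z' τ).fermi (one_add_exp_line_ne_zero hz')).sub
      (continuous_ofReal.neg.fermi fun x => by
        simpa using one_add_exp_ofReal_ne_zero (-x))).aestronglyMeasurable
  have key := hasDerivAt_integral_of_dominated_loc_of_deriv_le
    (F' := fun z' (x : ℝ) => -(fermi (z' + I * τ * x) * fermi (-(z' + I * τ * x))))
    (Metric.ball_mem_nhds z hε)
    (Filter.eventually_of_mem (isOpen_stripS.mem_nhds hz) hmeas)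
    (integrable_fermi_line_sub_fermi_neg hτ hz) ?_
    (ae_of_all _ fun x z' hz' => by
      simpa only [norm_neg] using hA z' (Metric.ball_subset_closedBall hz') x)
    ((integrable_exp_neg_mul_abs hτ).const_mul A)
    (ae_of_all _ fun x z' hz' => ?_)
  · rw [integral_neg, integral_fermi_mul_fermi_neg_line hτ hz] at key
    exact key.2
  · exact (continuous_fermi_mul_fermi_neg_line hz).neg.aestronglyMeasurable
  · have hd := (hasDerivAt_fermi (one_add_exp_line_ne_zero
      (hεS (Metric.ball_subset_closedBall hz')) x)).comp z' ((hasDerivAt_id z').add_const _)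
    rw [mul_one] at hd
    exact hd.sub_const _

lemma regFermiIntegral_eq (hτ : 0 < τ.im) (hz : z ∈ stripS τ) :
    regFermiIntegral τ z = -(I / τ) * z := by
  have h0 : regFermiIntegral τ 0 = 0 := by
    rw [← Fk_sub_Fk_neg hτ (zero_mem_stripS hτ), neg_zero, sub_self]
  refine isOpen_stripS.eqOn_of_deriv_eq convex_stripS.isPreconnected
    (fun z hz => (hasDerivAt_regFermiIntegral hτ hz).differentiableAt.differentiableWithinAt)
    (differentiableOn_id.const_mul _) (fun z hz => ?_) (zero_mem_stripS hτ) (by simp [h0]) hz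
  simp [(hasDerivAt_regFermiIntegral hτ hz).deriv]

end Regularized

theorem stmt3 (τ : ℂ) (hτ : 0 < τ.im) (z : ℂ) (hz : z ∈ stripS τ) :
    Fk z τ = Fk (-z) τ - Complex.I * z / τ := by
  linear_combination (Fk_sub_Fk_neg hτ hz).trans (regFermiIntegral_eq hτ hz)
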